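/- Fix a nonzero real number c. For every natural number n, the discrete arcsine law μ_c is supported on c·ℤ and its weights satisfy μ_c({c·n}) = μ_c({−c·n}) = (1/(2^n · c^{2n})) · ( Σ_{l=0}^∞ (−1)^l / ((√2·c)^{2l} · (n+l)! · l!) )². -/

import Mathlib

open MeasureTheory

/-- `a_n(c)`, the `n`-th Fourier coefficient of `t ↦ exp(i·√2·sin t / c)`. -/
noncomputable def arcsineFourierCoeff (c : ℝ) (n : ℤ) : ℂ :=
  (1 / (2 * Real.pi)) * ∫ t in (0 : ℝ)..(2 * Real.pi),
    Complex.exp (Complex.I * ((Real.sqrt 2 * Real.sin t / c : ℝ) : ℂ)) *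
      Complex.exp (-(Complex.I * (n : ℂ) * (t : ℂ)))

/-- The discrete arcsine law `μ_c = Σ_{n∈ℤ} |a_n(c)|²·δ_{cn}`. -/
noncomputable def discreteArcsine (c : ℝ) : Measure ℝ :=
  Measure.sum fun n : ℤ =>
    ENNReal.ofReal (‖arcsineFourierCoeff c n‖ ^ 2) • Measure.dirac (c * n)

/-!
The weight of `μ_c` at `cn` is `|a_n(c)|²`, and `a_n(c) = J_n(√2/c)`: expanding `exp(ix sin t)` in
its power series and integrating termwise, the `n`-th Fourier coefficient of `sin^k t` is a single
binomial coefficient, nonzero only for `k = n + 2l`, and these terms sum to the series of `J_n`.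
The substitution `t ↦ π - t` gives `a_{-n} = (-1)^n a_n`, whence the symmetry of the weights.
-/

open Complex Function Set

lemma intervalIntegral_exp_int_mul_I (m : ℤ) :
    ∫ t in (0 : ℝ)..2 * Real.pi, cexp (m * t * I) = if m = 0 then 2 * Real.pi else 0 := by
  split_ifs with hm
  · simp [hm]
  · have hmI : (m : ℂ) * I ≠ 0 := mul_ne_zero (Int.cast_ne_zero.2 hm) I_ne_zero
    simp_rw [mul_right_comm _ _ I]
    rw [integral_exp_mul_complex hmI, show (m : ℂ) * I * ↑(2 * Real.pi) = m * (2 * Real.pi * I) by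
      push_cast; ring]
    simp [Complex.exp_int_mul_two_pi_mul_I]

/-- Coefficient of `e^{imt}` in `(2i)^k sin^k t`, from `sin t = (e^{it} - e^{-it}) / (2i)`. -/
noncomputable def sinPowCoeff (k : ℕ) (m : ℤ) : ℝ :=
  ∑ j ∈ Finset.range (k + 1), if 2 * (j : ℤ) = k + m then (-1) ^ (k - j) * (k.choose j : ℝ) else 0

lemma sin_pow_mul_exp_eq_sum (k : ℕ) (m : ℤ) (t : ℝ) :
    Complex.sin t ^ k * cexp (-(I * m * t)) =
      ∑ j ∈ Finset.range (k + 1), (2 * I)⁻¹ ^ k * ((-1) ^ (k - j) * k.choose j) *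
        cexp ((2 * j - k - m : ℤ) * t * I) := by
  have hsin : Complex.sin t = (2 * I)⁻¹ * (cexp (I * t) + -cexp (-(I * t))) := by
    rw [Complex.sin]
    field_simp
    ring_nf
    simp [I_sq]
  rw [hsin, mul_pow, add_pow, Finset.mul_sum, Finset.sum_mul]
  refine Finset.sum_congr rfl fun j hj ↦ ?_
  have hjk : j ≤ k := Nat.lt_succ_iff.mp (Finset.mem_range.mp hj)
  have hexp : cexp (I * t) ^ j * cexp (-(I * t)) ^ (k - j) * cexp (-(I * m * t)) =
      cexp ((2 * j - k - m : ℤ) * t * I) := by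
    rw [← Complex.exp_nat_mul, ← Complex.exp_nat_mul, ← Complex.exp_add, ← Complex.exp_add]
    push_cast [Nat.cast_sub hjk]
    ring_nf
  rw [neg_pow, ← hexp]
  ring

lemma intervalIntegral_sin_pow_mul_exp (k : ℕ) (m : ℤ) :
    ∫ t in (0 : ℝ)..2 * Real.pi, Complex.sin t ^ k * cexp (-(I * m * t)) =
      2 * Real.pi * (2 * I)⁻¹ ^ k * sinPowCoeff k m := by
  simp_rw [sin_pow_mul_exp_eq_sum]
  rw [intervalIntegral.integral_finsetSum fun j _ ↦ (by fun_prop : Continuous _).intervalIntegrable _ _,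
    sinPowCoeff, Complex.ofReal_sum, Finset.mul_sum]
  refine Finset.sum_congr rfl fun j _ ↦ ?_
  rw [intervalIntegral.integral_const_mul, intervalIntegral_exp_int_mul_I]
  simp only [sub_sub, sub_eq_zero]
  split_ifs <;> push_cast <;> ring

lemma norm_exp_neg_I_mul_int_mul (m : ℤ) (t : ℝ) : ‖cexp (-(I * m * t))‖ = 1 := by
  rw [show -(I * m * t) = ((-(m * t) : ℝ) : ℂ) * I by push_cast; ring, norm_exp_ofReal_mul_I]

lemma hasSum_intervalIntegral_exp_I_mul_sin (x : ℝ) (m : ℤ) :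
    HasSum (fun k : ℕ ↦ 2 * Real.pi * (((x / 2) ^ k / k.factorial * sinPowCoeff k m : ℝ) : ℂ))
      (∫ t in (0 : ℝ)..2 * Real.pi, cexp (I * ((x * Real.sin t : ℝ) : ℂ)) * cexp (-(I * m * t))) := by
  set F : ℕ → ℝ → ℂ := fun k t ↦
    (I * ((x * Real.sin t : ℝ) : ℂ)) ^ k / k.factorial * cexp (-(I * m * t))
  have hF : ∀ k, ∫ t in (0 : ℝ)..2 * Real.pi, F k t =
      2 * Real.pi * (((x / 2) ^ k / k.factorial * sinPowCoeff k m : ℝ) : ℂ) := by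
    intro k
    have hFk : ∀ t : ℝ, F k t = (I * x) ^ k / k.factorial * (Complex.sin t ^ k * cexp (-(I * m * t))) :=
      fun t ↦ by simp only [F]; push_cast; ring
    simp_rw [hFk]
    rw [intervalIntegral.integral_const_mul, intervalIntegral_sin_pow_mul_exp]
    have hI : I * x * (2 * I)⁻¹ = x / 2 := by field_simp
    push_cast
    rw [← hI, mul_pow]
    ring
  simp_rw [← hF]
  refine intervalIntegral.hasSum_integral_of_dominated_convergence
    (fun k _ ↦ |x| ^ k / k.factorial) (fun k ↦ (by fun_prop : Continuous (F k)).aestronglyMeasurable)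
    (fun k ↦ .of_forall fun t _ ↦ ?_) (.of_forall fun t _ ↦ Real.summable_pow_div_factorial |x|)
    intervalIntegrable_const (.of_forall fun t _ ↦ ?_)
  · rw [norm_mul, norm_exp_neg_I_mul_int_mul, mul_one, norm_div, norm_pow, norm_mul, norm_I, one_mul,
      norm_real, Real.norm_eq_abs, Complex.norm_natCast, abs_mul]
    gcongr
    exact mul_le_of_le_one_right (abs_nonneg x) (Real.abs_sin_le_one t)
  · have hexp := NormedSpace.expSeries_div_hasSum_exp (I * ((x * Real.sin t : ℝ) : ℂ))
    rw [← Complex.exp_eq_exp_ℂ] at hexp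
    exact hexp.mul_right _

noncomputable def besselJ (n : ℕ) (x : ℝ) : ℝ :=
  ∑' l : ℕ, (-1) ^ l * (x / 2) ^ (n + 2 * l) / ((n + l).factorial * l.factorial)

lemma sinPowCoeff_add_two_mul (n l : ℕ) :
    sinPowCoeff (n + 2 * l) n = (-1) ^ l * ((n + 2 * l).choose (n + l) : ℝ) := by
  have hj : ∀ j : ℕ, 2 * (j : ℤ) = ((n + 2 * l : ℕ) : ℤ) + n ↔ j = n + l := fun j ↦ by omega
  simp only [sinPowCoeff, hj, Finset.sum_ite_eq', Finset.mem_range]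
  rw [if_pos (by omega), show n + 2 * l - (n + l) = l by omega]

lemma sinPowCoeff_eq_zero {n k : ℕ} (hk : k ∉ range (fun l ↦ n + 2 * l)) : sinPowCoeff k n = 0 := by
  refine Finset.sum_eq_zero fun j hj ↦ if_neg fun h ↦ hk ⟨j - n, ?_⟩
  have := Finset.mem_range.mp hj
  dsimp only
  omega

lemma tsum_sinPowCoeff_eq_besselJ (n : ℕ) (x : ℝ) :
    ∑' k : ℕ, (x / 2) ^ k / k.factorial * sinPowCoeff k n = besselJ n x := by
  have hinj : Injective fun l : ℕ ↦ n + 2 * l := fun a b h ↦ by dsimp only at h; omega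
  rw [besselJ, ← hinj.tsum_eq fun k hk ↦ by_contra fun hk' ↦ hk (by rw [sinPowCoeff_eq_zero hk', mul_zero])]
  refine tsum_congr fun l ↦ ?_
  rw [sinPowCoeff_add_two_mul, Nat.cast_choose ℝ (by omega : n + l ≤ n + 2 * l),
    show n + 2 * l - (n + l) = l by omega]
  field_simp

lemma intervalIntegral_exp_I_mul_sin_mul_exp (n : ℕ) (x : ℝ) :
    ∫ t in (0 : ℝ)..2 * Real.pi, cexp (I * ((x * Real.sin t : ℝ) : ℂ)) * cexp (-(I * n * t)) =
      2 * Real.pi * besselJ n x := by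
  have hsum := hasSum_intervalIntegral_exp_I_mul_sin x n
  rw [Int.cast_natCast] at hsum
  rw [← hsum.tsum_eq, tsum_mul_left, ← ofReal_tsum]
  exact_mod_cast congr_arg _ (tsum_sinPowCoeff_eq_besselJ n x)

lemma intervalIntegral_comp_sin_mul_exp_I_mul (g : ℝ → ℂ) (n : ℕ) :
    ∫ t in (0 : ℝ)..2 * Real.pi, g (Real.sin t) * cexp (I * n * t) =
      (-1) ^ n * ∫ t in (0 : ℝ)..2 * Real.pi, g (Real.sin t) * cexp (-(I * n * t)) := by
  set f : ℝ → ℂ := fun t ↦ g (Real.sin t) * cexp (-(I * n * t))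
  have hf : Periodic f (2 * Real.pi) := fun t ↦ by
    have : cexp (-(I * n * ↑(t + 2 * Real.pi))) = cexp (-(I * n * t)) := by
      rw [show -(I * n * ↑(t + 2 * Real.pi)) = -(I * n * t) + (-n : ℤ) * (2 * Real.pi * I) by
        push_cast; ring, Complex.exp_add, Complex.exp_int_mul_two_pi_mul_I, mul_one]
    simp only [f, Real.sin_periodic t, this]
  have hreflect : ∀ t : ℝ, g (Real.sin t) * cexp (I * n * t) = (-1) ^ n * f (Real.pi - t) := by
    intro t
    have : cexp (-(I * n * ↑(Real.pi - t))) = (-1) ^ n * cexp (I * n * t) := by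
      rw [show -(I * n * ↑(Real.pi - t)) = n * (-(Real.pi * I)) + I * n * t by push_cast; ring,
        Complex.exp_add, Complex.exp_nat_mul, Complex.exp_neg, Complex.exp_pi_mul_I]
      norm_num
    have hsign : ((-1 : ℂ) ^ n) ^ 2 = 1 := by rw [← pow_mul, pow_mul', neg_one_sq, one_pow]
    simp only [f, Real.sin_pi_sub, this]
    linear_combination -(g (Real.sin t) * cexp (I * n * t)) * hsign
  simp only [hreflect, intervalIntegral.integral_const_mul, intervalIntegral.integral_comp_sub_left f]
  rw [show Real.pi - 2 * Real.pi = -Real.pi by ring, show Real.pi - 0 = -Real.pi + 2 * Real.pi by ring,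
    hf.intervalIntegral_add_eq (-Real.pi) 0, zero_add]

lemma besselJ_two_div (n : ℕ) (y : ℝ) :
    besselJ n (2 / y) =
      (y ^ n)⁻¹ * ∑' l : ℕ, (-1) ^ l / (y ^ (2 * l) * (n + l).factorial * l.factorial) := by
  rw [besselJ, ← tsum_mul_left]
  refine tsum_congr fun l ↦ ?_
  rw [div_div_cancel_left' two_ne_zero, inv_pow, pow_add, mul_inv]
  ring

lemma arcsineFourierCoeff_natCast (c : ℝ) (n : ℕ) :
    arcsineFourierCoeff c n = besselJ n (Real.sqrt 2 / c) := by
  simp_rw [arcsineFourierCoeff, mul_div_right_comm _ (Real.sin _), Int.cast_natCast,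
    intervalIntegral_exp_I_mul_sin_mul_exp]
  field_simp

lemma arcsineFourierCoeff_neg_natCast (c : ℝ) (n : ℕ) :
    arcsineFourierCoeff c (-n) = (-1) ^ n * arcsineFourierCoeff c n := by
  simp_rw [arcsineFourierCoeff, Int.cast_neg, Int.cast_natCast, mul_neg, neg_mul, neg_neg,
    intervalIntegral_comp_sin_mul_exp_I_mul (fun s ↦ cexp (I * ((Real.sqrt 2 * s / c : ℝ) : ℂ)))]
  ring

namespace MeasureTheory.Measure

variable {ι α : Type*} [MeasurableSpace α] [MeasurableSingletonClass α]

lemma sum_smul_dirac_apply_singleton_of_injective {f : ι → α} (hf : Injective f)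
    (w : ι → ENNReal) (i : ι) : sum (fun j ↦ w j • dirac (f j)) {f i} = w i := by
  rw [sum_apply _ (measurableSet_singleton _), tsum_eq_single i]
  · simp
  · intro j hj
    simp [hf.ne hj]

lemma sum_smul_dirac_apply_compl_range [Countable ι] (f : ι → α) (w : ι → ENNReal) :
    sum (fun j ↦ w j • dirac (f j)) (range f)ᶜ = 0 :=
  sum_apply_eq_zero.2 fun j ↦ by simp

end MeasureTheory.Measure

/-- The discrete arcsine law `μ_c` is supported on `c·ℤ`, and its weights are
`μ_c({cn}) = μ_c({−cn}) = (1/(2ⁿc^{2n}))·(Σ_{l=0}^∞ (−1)^l/((√2·c)^{2l}·(n+l)!·l!))²`. -/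
theorem discreteArcsine_weights (c : ℝ) (hc : c ≠ 0) (n : ℕ) :
    discreteArcsine c (Set.range fun k : ℤ => c * k)ᶜ = 0 ∧
    discreteArcsine c {c * (n : ℝ)} = discreteArcsine c {-(c * (n : ℝ))} ∧
    discreteArcsine c {c * (n : ℝ)} =
      ENNReal.ofReal
        (1 / (2 ^ n * c ^ (2 * n)) *
          (∑' l : ℕ, (-1 : ℝ) ^ l /
            ((Real.sqrt 2 * c) ^ (2 * l) * (Nat.factorial (n + l)) * (Nat.factorial l))) ^ 2) := by
  have hinj : Injective fun k : ℤ ↦ c * k := (mul_right_injective₀ hc).comp Int.cast_injective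
  have hweight (m : ℤ) : discreteArcsine c {c * m} = ENNReal.ofReal (‖arcsineFourierCoeff c m‖ ^ 2) :=
    Measure.sum_smul_dirac_apply_singleton_of_injective hinj _ m
  have hpos : c * n = c * ((n : ℤ) : ℝ) := by rw [Int.cast_natCast]
  have hneg : -(c * n) = c * ((-n : ℤ) : ℝ) := by push_cast; ring
  refine ⟨Measure.sum_smul_dirac_apply_compl_range _ _, ?_, ?_⟩
  · rw [hneg, hpos, hweight, hweight, arcsineFourierCoeff_neg_natCast, norm_mul, norm_pow, norm_neg,
      norm_one, one_pow, one_mul]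
  · have hx : Real.sqrt 2 / c = 2 / (Real.sqrt 2 * c) := by
      field_simp
      rw [Real.sq_sqrt zero_le_two]
    have hscale : ((Real.sqrt 2 * c) ^ n)⁻¹ ^ 2 = 1 / (2 ^ n * c ^ (2 * n)) := by
      rw [inv_pow, ← pow_mul, mul_comm n, pow_mul, mul_pow, Real.sq_sqrt zero_le_two, mul_pow,
        ← pow_mul, one_div]
    rw [hpos, hweight, arcsineFourierCoeff_natCast, norm_real, Real.norm_eq_abs, sq_abs, hx,
      besselJ_two_div, mul_pow, hscale]
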